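/- For q ∈ X^#, q belongs to the closure of K(X^#) = ⋃{M : M minimal closed invariant subset of X^#} if and only if every member Q of q is prethick in X (i.e., B(Q,r) is thick for some r ≥ 0). -/

import Mathlib

open Metric Bornology Set

variable {X : Type*} [MetricSpace X]

/-- `B(A,r) = ⋃_{a∈A} B(a,r)` where `B(a,r)` is the closed ball of radius `r`. -/
def ballU (A : Set X) (r : ℝ) : Set X := ⋃ a ∈ A, Metric.closedBall a r

/-- `X^#`: the set of ultrafilters on `X` all of whose members are unbounded. -/
def sharp (X : Type*) [MetricSpace X] : Set (Ultrafilter X) :=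
  {p | ∀ P ∈ p, ¬ Bornology.IsBounded P}

/-- Parallelity: `p ∥ q` iff there is `r ≥ 0` with `B(Q,r) ∈ p` for every `Q ∈ q`. -/
def Par (p q : Ultrafilter X) : Prop :=
  ∃ r : ℝ, 0 ≤ r ∧ ∀ Q ∈ q, ballU Q r ∈ p

/-- `p̆ = {q ∈ X^# : q ∥ p}`. -/
def pbreve (p : Ultrafilter X) : Set (Ultrafilter X) :=
  {q | q ∈ sharp X ∧ Par q p}

/-- The `p`-companion `Δ_p(Y) = {q ∈ X^# : Y ∈ q, q ∥ p}`. -/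
def Delta (p : Ultrafilter X) (Y : Set X) : Set (Ultrafilter X) :=
  {q | q ∈ sharp X ∧ Y ∈ q ∧ Par q p}

/-- A set `S ⊆ X^#` is invariant if `p ∈ S`, `q ∈ X^#`, `q ∥ p` imply `q ∈ S`. -/
def Invt (S : Set (Ultrafilter X)) : Prop :=
  ∀ p ∈ S, ∀ q, q ∈ sharp X → Par q p → q ∈ S

/-- `Y` is large if `X = B(Y,r)` for some `r ≥ 0`. -/
def Large (Y : Set X) : Prop := ∃ r : ℝ, 0 ≤ r ∧ ballU Y r = Set.univ

/-- `Y` is thick if for every `r ≥ 0` there is `y ∈ Y` with `B(y,r) ⊆ Y`. -/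
def Thick (Y : Set X) : Prop := ∀ r : ℝ, 0 ≤ r → ∃ y ∈ Y, Metric.closedBall y r ⊆ Y

/-- `Y` is prethick if `B(Y,r)` is thick for some `r ≥ 0`. -/
def Prethick (Y : Set X) : Prop := ∃ r : ℝ, 0 ≤ r ∧ Thick (ballU Y r)

/-- `Y` is small if `(X∖Y) ∩ L` is large for every large `L`. -/
def SmallSet (Y : Set X) : Prop := ∀ L : Set X, Large L → Large (Yᶜ ∩ L)

/-- `Y` is thin if for each `r ≥ 0` there is a bounded `V` with
`B(y,r) ∩ Y = {y}` for all `y ∈ Y∖V`. -/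
def Thin (Y : Set X) : Prop :=
  ∀ r : ℝ, 0 ≤ r → ∃ V : Set X, Bornology.IsBounded V ∧
    ∀ y ∈ Y \ V, Metric.closedBall y r ∩ Y = {y}

/-- `Y` is `n`-thin if for each `r ≥ 0` there is a bounded `V` with
`|B(y,r) ∩ Y| ≤ n` for all `y ∈ Y∖V`. -/
def NThin (n : ℕ) (Y : Set X) : Prop :=
  ∀ r : ℝ, 0 ≤ r → ∃ V : Set X, Bornology.IsBounded V ∧
    ∀ y ∈ Y \ V, (Metric.closedBall y r ∩ Y).encard ≤ n

/-- `M` is a minimal nonempty closed invariant subset of `X^#`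
(closures/closedness taken in the Stone topology on ultrafilters). -/
def MinCI (M : Set (Ultrafilter X)) : Prop :=
  M ⊆ sharp X ∧ M.Nonempty ∧ IsClosed M ∧ Invt M ∧
    ∀ S ⊆ M, S.Nonempty → IsClosed S → Invt S → S = M

/-!
A minimal closed invariant set `M` is the closure of the orbit `p̆` of each of its points. Hence a
member `Q` of some `p ∈ M` has a neighbourhood `B(Q,s)` in every point of `M`, and by compactness
of `M` one radius `N` serves for all of them. Moving a point of `M` by a map of displacement at
most `t` stays inside `M`, so if `B(Q,N)` were not thick, pushing every point `t`-close to its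
complement would produce a point of `M` missing `B(Q,N)`.

Conversely, if `T = B(Q,r)` is thick, its cores `{x | B(x,ρ) ⊆ T}` are unbounded and decreasing,
so some `u ∈ X^#` contains all of them; then `T` belongs to every point of the closure of `ŭ`. A
minimal set inside that closure has a point containing `T = B(Q,r)`, hence a parallel point
containing `Q`.
-/

open Filter

theorem mem_ballU {A : Set X} {r : ℝ} {x : X} : x ∈ ballU A r ↔ ∃ a ∈ A, dist x a ≤ r := by
  simp [ballU, Metric.mem_closedBall]

theorem subset_ballU {A : Set X} {r : ℝ} (hr : 0 ≤ r) : A ⊆ ballU A r := fun x hx =>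
  mem_ballU.2 ⟨x, hx, by simpa using hr⟩

theorem ballU_mono {A : Set X} {r s : ℝ} (h : r ≤ s) : ballU A r ⊆ ballU A s := fun _ hx =>
  let ⟨a, ha, hd⟩ := mem_ballU.1 hx
  mem_ballU.2 ⟨a, ha, hd.trans h⟩

theorem ballU_ballU_subset {A : Set X} {r s : ℝ} : ballU (ballU A r) s ⊆ ballU A (r + s) := by
  intro x hx
  obtain ⟨b, hb, hxb⟩ := mem_ballU.1 hx
  obtain ⟨a, ha, hba⟩ := mem_ballU.1 hb
  exact mem_ballU.2 ⟨a, ha, (dist_triangle x b a).trans (by linarith)⟩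

theorem ballU_subset_cthickening {A : Set X} {r : ℝ} : ballU A r ⊆ cthickening r A := fun x hx =>
  let ⟨a, ha, hd⟩ := mem_ballU.1 hx
  mem_cthickening_of_dist_le x a r A ha hd

theorem Bornology.IsBounded.ballU {A : Set X} (hA : IsBounded A) (r : ℝ) :
    IsBounded (ballU A r) :=
  (hA.cthickening (δ := r)).subset ballU_subset_cthickening

theorem ballU_mem_of_forall_ballU_mem {p q : Ultrafilter X} {r : ℝ}
    (h : ∀ Q ∈ q, ballU Q r ∈ p) : ∀ P ∈ p, ballU P r ∈ q := by
  intro P hP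
  by_contra hPq
  obtain ⟨x, hxP, hx⟩ :=
    Ultrafilter.nonempty_of_mem (p.inter_mem hP (h _ (Ultrafilter.compl_mem_iff_notMem.2 hPq)))
  obtain ⟨z, hz, hxz⟩ := mem_ballU.1 hx
  exact hz (mem_ballU.2 ⟨x, hxP, by rwa [dist_comm]⟩)

theorem Par.symm {p q : Ultrafilter X} (h : Par p q) : Par q p :=
  let ⟨r, hr, h⟩ := h
  ⟨r, hr, ballU_mem_of_forall_ballU_mem h⟩

theorem Par.refl (p : Ultrafilter X) : Par p p :=
  ⟨0, le_rfl, fun _ hQ => p.sets_of_superset hQ (subset_ballU le_rfl)⟩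

theorem Par.trans {p q w : Ultrafilter X} (hpq : Par p q) (hqw : Par q w) : Par p w := by
  obtain ⟨r, hr, hpq⟩ := hpq
  obtain ⟨s, hs, hqw⟩ := hqw
  exact ⟨s + r, by linarith, fun W hW => p.sets_of_superset (hpq _ (hqw _ hW)) ballU_ballU_subset⟩

theorem mem_sharp_iff_le_cobounded {u : Ultrafilter X} : u ∈ sharp X ↔ ↑u ≤ cobounded X := by
  rw [← not_iff_not, ← Ultrafilter.disjoint_iff_not_le, disjoint_cobounded_iff]
  simp [sharp]

theorem isClosed_sharp : IsClosed (sharp X) := by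
  have : sharp X = ⋂ s ∈ cobounded X, {u : Ultrafilter X | s ∈ u} := by
    ext u
    simp [mem_sharp_iff_le_cobounded, Filter.le_def]
  rw [this]
  exact isClosed_biInter fun s _ => ultrafilter_isClosed_basic s

theorem mem_closure_ultrafilter_iff {α : Type*} {S : Set (Ultrafilter α)} {q : Ultrafilter α} :
    q ∈ closure S ↔ ∀ Q ∈ q, ∃ p ∈ S, Q ∈ p := by
  rw [ultrafilterBasis_is_basis.mem_closure_iff]
  constructor
  · intro h Q hQ
    obtain ⟨p, hQp, hpS⟩ := h {p | Q ∈ p} ⟨Q, rfl⟩ hQ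
    exact ⟨p, hpS, hQp⟩
  · rintro h o ⟨Q, rfl⟩ hQ
    obtain ⟨p, hpS, hQp⟩ := h Q hQ
    exact ⟨p, hQp, hpS⟩

section Displacement

variable {p : Ultrafilter X} {f : X → X} {r : ℝ}

theorem map_mem_sharp (hp : p ∈ sharp X) (hf : ∀ x, dist (f x) x ≤ r) : p.map f ∈ sharp X := by
  intro P hP hPb
  refine hp _ (Ultrafilter.mem_map.1 hP) ((hPb.ballU r).subset fun x hx => ?_)
  exact mem_ballU.2 ⟨f x, hx, by rw [dist_comm]; exact hf x⟩

theorem par_map (hr : 0 ≤ r) (hf : ∀ x, dist (f x) x ≤ r) : Par (p.map f) p :=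
  ⟨r, hr, fun _ hP => Ultrafilter.mem_map.2 <|
    p.sets_of_superset hP fun x hx => mem_ballU.2 ⟨x, hx, hf x⟩⟩

end Displacement

theorem delta_nonempty_of_ballU_mem {p : Ultrafilter X} (hp : p ∈ sharp X) {A : Set X} {r : ℝ}
    (hr : 0 ≤ r) (hA : ballU A r ∈ p) : (Delta p A).Nonempty := by
  classical
  have hnear : ∀ x ∈ ballU A r, ∃ a ∈ A, dist x a ≤ r := fun _ => mem_ballU.1
  choose! g hgA hg using hnear
  set f : X → X := fun x => if x ∈ ballU A r then g x else x
  have hf : ∀ x, dist (f x) x ≤ r := by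
    intro x
    by_cases hx : x ∈ ballU A r
    · simp only [f, if_pos hx]
      rw [dist_comm]
      exact hg x hx
    · simp [f, hx, hr]
  refine ⟨p.map f, map_mem_sharp hp hf, ?_, par_map hr hf⟩
  refine Ultrafilter.mem_map.2 (p.sets_of_superset hA fun x hx => ?_)
  simp only [f, mem_preimage, if_pos hx]
  exact hgA x hx

theorem Invt.closure {S : Set (Ultrafilter X)} (hS : Invt S) (hSsh : S ⊆ sharp X) :
    Invt (closure S) := by
  intro p hp q hq hqp
  rw [mem_closure_ultrafilter_iff]
  intro Q hQ
  obtain ⟨s, hs, hpq⟩ := hqp.symm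
  obtain ⟨p₁, hp₁S, hp₁⟩ := mem_closure_ultrafilter_iff.1 hp _ (hpq _ hQ)
  obtain ⟨p', hp'sh, hQp', hp'p₁⟩ := delta_nonempty_of_ballU_mem (hSsh hp₁S) hs hp₁
  exact ⟨p', hS _ hp₁S _ hp'sh hp'p₁, hQp'⟩

theorem Invt.thick_of_forall_mem {S : Set (Ultrafilter X)} (hS : Invt S) (hSsh : S ⊆ sharp X)
    {p : Ultrafilter X} (hp : p ∈ S) {A : Set X} (hA : ∀ p' ∈ S, A ∈ p') : Thick A := by
  intro t ht
  by_contra hAt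
  push Not at hAt
  have hout : ∀ x, ∃ z, dist z x ≤ t ∧ z ∉ A := by
    intro x
    by_cases hx : x ∈ A
    · obtain ⟨z, hz, hzA⟩ := not_subset.1 (hAt x hx)
      exact ⟨z, mem_closedBall.1 hz, hzA⟩
    · exact ⟨x, by simpa using ht, hx⟩
  choose f hf hfA using hout
  have hAf : A ∈ p.map f := hA _ (hS p hp _ (map_mem_sharp (hSsh hp) hf) (par_map ht hf))
  obtain ⟨x, hx⟩ := Ultrafilter.nonempty_of_mem (Ultrafilter.mem_map.1 hAf)
  exact hfA x hx

theorem pbreve_subset_sharp (p : Ultrafilter X) : pbreve p ⊆ sharp X := fun _ hq => hq.1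

theorem self_mem_pbreve {p : Ultrafilter X} (hp : p ∈ sharp X) : p ∈ pbreve p := ⟨hp, Par.refl p⟩

theorem invt_closure_pbreve (p : Ultrafilter X) : Invt (closure (pbreve p)) :=
  Invt.closure (fun _ hq₁ _ hq₂ hpar => ⟨hq₂, hpar.trans hq₁.2⟩) (pbreve_subset_sharp p)

theorem exists_minCI_subset {C : Set (Ultrafilter X)} (hC : C ⊆ sharp X) (hne : C.Nonempty)
    (hcl : IsClosed C) (hinv : Invt C) : ∃ M, MinCI M ∧ M ⊆ C := by
  set 𝒮 : Set (Set (Ultrafilter X)) := {S | S ⊆ C ∧ S.Nonempty ∧ IsClosed S ∧ Invt S}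
  have hchain : ∀ c ⊆ 𝒮, IsChain (· ⊆ ·) c → c.Nonempty → ∃ lb ∈ 𝒮, ∀ s ∈ c, lb ⊆ s := by
    intro c hc hchain hcne
    have : Nonempty c := hcne.to_subtype
    refine ⟨⋂₀ c, ⟨?_, ?_, ?_, ?_⟩, fun s hs => sInter_subset_of_mem hs⟩
    · obtain ⟨s, hs⟩ := hcne
      exact (sInter_subset_of_mem hs).trans (hc hs).1
    · exact IsCompact.nonempty_sInter_of_directed_nonempty_isCompact_isClosed
        (IsChain.directedOn (r := (· ⊇ ·)) fun _ ha _ hb hab => (hchain ha hb hab).symm)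
        (fun U hU => (hc hU).2.1)
        (fun U hU => (hc hU).2.2.1.isCompact) (fun U hU => (hc hU).2.2.1)
    · exact isClosed_sInter fun U hU => (hc hU).2.2.1
    · intro p hp q hq hqp
      exact mem_sInter.2 fun U hU => (hc hU).2.2.2 _ (mem_sInter.1 hp U hU) _ hq hqp
  obtain ⟨M, hMC, ⟨hM𝒮C, hMne, hMcl, hMinv⟩, hMmin⟩ :=
    zorn_superset_nonempty 𝒮 hchain C ⟨Subset.rfl, hne, hcl, hinv⟩
  exact ⟨M, ⟨hM𝒮C.trans hC, hMne, hMcl, hMinv, fun S hSM hSne hScl hSinv =>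
    hSM.antisymm (hMmin ⟨hSM.trans hM𝒮C, hSne, hScl, hSinv⟩ hSM)⟩, hMC⟩

theorem exists_minCI_subset_closure_pbreve {u : Ultrafilter X} (hu : u ∈ sharp X) :
    ∃ M, MinCI M ∧ M ⊆ closure (pbreve u) :=
  exists_minCI_subset (closure_minimal (pbreve_subset_sharp u) isClosed_sharp)
    ⟨u, subset_closure (self_mem_pbreve hu)⟩ isClosed_closure (invt_closure_pbreve u)

namespace MinCI

variable {M : Set (Ultrafilter X)} {p : Ultrafilter X}

theorem closure_pbreve_eq (hM : MinCI M) (hp : p ∈ M) : closure (pbreve p) = M := by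
  obtain ⟨hMsh, -, hMcl, hMinv, hMmin⟩ := hM
  exact hMmin _ (closure_minimal (fun q hq => hMinv p hp q hq.1 hq.2) hMcl)
    ⟨p, subset_closure (self_mem_pbreve (hMsh hp))⟩ isClosed_closure (invt_closure_pbreve p)

theorem exists_ballU_mem (hM : MinCI M) (hp : p ∈ M) {p' : Ultrafilter X} (hp' : p' ∈ M)
    {Q : Set X} (hQ : Q ∈ p) : ∃ s : ℝ, ballU Q s ∈ p' := by
  rw [← hM.closure_pbreve_eq hp'] at hp
  obtain ⟨p₁, ⟨-, s, -, hp₁p'⟩, hQp₁⟩ := mem_closure_ultrafilter_iff.1 hp Q hQ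
  exact ⟨s, ballU_mem_of_forall_ballU_mem hp₁p' Q hQp₁⟩

theorem exists_forall_ballU_mem (hM : MinCI M) (hp : p ∈ M) {Q : Set X} (hQ : Q ∈ p) :
    ∃ N : ℕ, ∀ p' ∈ M, ballU Q N ∈ p' := by
  have hcover : M ⊆ ⋃ n : ℕ, {p' : Ultrafilter X | ballU Q n ∈ p'} := fun p' hp' => by
    obtain ⟨s, hs⟩ := hM.exists_ballU_mem hp hp' hQ
    exact mem_iUnion.2 ⟨⌈s⌉₊, p'.sets_of_superset hs (ballU_mono (Nat.le_ceil s))⟩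
  have hmono : Monotone fun n : ℕ => {p' : Ultrafilter X | ballU Q n ∈ p'} :=
    fun _ _ hmn p' h => p'.sets_of_superset h (ballU_mono (by exact_mod_cast hmn))
  exact hM.2.2.1.isCompact.elim_directed_cover _ (fun _ => ultrafilter_isOpen_basic _) hcover
    hmono.directed_le

theorem prethick_of_mem (hM : MinCI M) (hp : p ∈ M) {Q : Set X} (hQ : Q ∈ p) : Prethick Q := by
  obtain ⟨N, hN⟩ := hM.exists_forall_ballU_mem hp hQ
  obtain ⟨hMsh, -, -, hMinv, -⟩ := hM
  exact ⟨N, N.cast_nonneg, hMinv.thick_of_forall_mem hMsh hp hN⟩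

end MinCI

def thickCore (T : Set X) (r : ℝ) : Set X := {x | closedBall x r ⊆ T}

theorem thickCore_antitone (T : Set X) : Antitone (thickCore T) := fun _ _ hrs _ hx =>
  (closedBall_subset_closedBall hrs).trans hx

theorem ballU_thickCore_subset (T : Set X) (r : ℝ) : ballU (thickCore T r) r ⊆ T := fun _ hx =>
  let ⟨_, ha, hxa⟩ := mem_ballU.1 hx
  ha (mem_closedBall.2 hxa)

theorem Thick.not_isBounded_thickCore (hX : ¬ IsBounded (univ : Set X)) {T : Set X} (hT : Thick T)
    (r : ℝ) : ¬ IsBounded (thickCore T r) := by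
  intro hb
  obtain ⟨x₀⟩ : Nonempty X := by
    by_contra hempty
    exact hX (by simp [univ_eq_empty_iff.2 (not_nonempty_iff.1 hempty)])
  obtain ⟨R, hR⟩ := (isBounded_iff_subset_closedBall x₀).1 hb
  obtain ⟨z, hz⟩ : ∃ z, R < dist z x₀ := by
    by_contra! hall
    exact hX ((isBounded_iff_subset_closedBall x₀).2 ⟨R, fun z _ => hall z⟩)
  -- the centre `y` lies in the core, hence near `x₀`, and the radius makes `B(y,ρ) ⊇ B(z,r)`
  obtain ⟨y, -, hy⟩ := hT (dist z x₀ + |R| + |r|) (by positivity)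
  have hycore : y ∈ thickCore T r := (closedBall_subset_closedBall (by
    linarith [le_abs_self r, abs_nonneg R, dist_nonneg (x := z) (y := x₀)])).trans hy
  have hyR : dist y x₀ ≤ R := mem_closedBall.1 (hR hycore)
  have hzcore : z ∈ thickCore T r := by
    refine (closedBall_subset_closedBall' ?_).trans hy
    linarith [dist_triangle_right z y x₀, le_abs_self R, le_abs_self r]
  exact (mem_closedBall.1 (hR hzcore)).not_gt hz

theorem exists_mem_sharp_forall_mem {ι : Type*} [Preorder ι] [IsDirectedOrder ι] [Nonempty ι]
    {s : ι → Set X} (hs : Antitone s) (hunb : ∀ i, ¬ IsBounded (s i)) :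
    ∃ u ∈ sharp X, ∀ i, s i ∈ u := by
  set l : Filter X := ⨅ i, 𝓟 (s i)
  have hdir : Directed (· ≥ ·) fun i => 𝓟 (s i) :=
    Antitone.directed_ge fun _ _ hij => principal_mono.2 (hs hij)
  have hl : ¬ Disjoint l (cobounded X) := by
    rw [disjoint_cobounded_iff]
    rintro ⟨t, ht, htb⟩
    obtain ⟨i, hi⟩ := (mem_iInf_of_directed hdir t).1 ht
    exact hunb i (htb.subset (mem_principal.1 hi))
  have : NeBot (l ⊓ cobounded X) := ⟨fun h => hl (disjoint_iff.2 h)⟩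
  exact ⟨Ultrafilter.of (l ⊓ cobounded X),
    mem_sharp_iff_le_cobounded.2 ((Ultrafilter.of_le _).trans inf_le_right),
    fun i => Ultrafilter.of_le _ (mem_inf_of_left (mem_iInf_of_mem i (mem_principal_self _)))⟩

theorem Par.mem_of_forall_thickCore_mem {q u : Ultrafilter X} (hqu : Par q u) {T : Set X}
    (hT : ∀ r, thickCore T r ∈ u) : T ∈ q :=
  let ⟨r, _, hqu⟩ := hqu
  q.sets_of_superset (hqu _ (hT r)) (ballU_thickCore_subset T r)

theorem closure_pbreve_subset_setOf_mem {u : Ultrafilter X} {T : Set X}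
    (hT : ∀ r, thickCore T r ∈ u) :
    closure (pbreve u) ⊆ {p | T ∈ p} :=
  closure_minimal (fun _ hq => hq.2.mem_of_forall_thickCore_mem hT) (ultrafilter_isClosed_basic T)

theorem stmt6_general (hX : ¬ Bornology.IsBounded (Set.univ : Set X))
    (q : Ultrafilter X) :
    q ∈ closure {q' : Ultrafilter X | ∃ M : Set (Ultrafilter X), MinCI M ∧ q' ∈ M} ↔
      ∀ Q ∈ q, Prethick Q := by
  rw [mem_closure_ultrafilter_iff]
  refine forall₂_congr fun Q _ => ⟨?_, ?_⟩
  · rintro ⟨p, ⟨M, hM, hpM⟩, hQp⟩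
    exact hM.prethick_of_mem hpM hQp
  · rintro ⟨r, hr, hT⟩
    obtain ⟨u, hu, hcore⟩ :=
      exists_mem_sharp_forall_mem (thickCore_antitone _) (hT.not_isBounded_thickCore hX)
    obtain ⟨M, hM, hMu⟩ := exists_minCI_subset_closure_pbreve hu
    obtain ⟨hMsh, ⟨p, hp⟩, -, hMinv, -⟩ := id hM
    have hTp : ballU Q r ∈ p := closure_pbreve_subset_setOf_mem hcore (hMu hp)
    obtain ⟨p', hp'sh, hQp', hp'p⟩ := delta_nonempty_of_ballU_mem (hMsh hp) hr hTp
    exact ⟨p', ⟨M, hM, hMinv p hp p' hp'sh hp'p⟩, hQp'⟩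

theorem stmt6 (hX : ¬ Bornology.IsBounded (Set.univ : Set X))
    (q : Ultrafilter X) (hq : q ∈ sharp X) :
    q ∈ closure {q' : Ultrafilter X | ∃ M : Set (Ultrafilter X), MinCI M ∧ q' ∈ M} ↔
      ∀ Q ∈ q, Prethick Q :=
  stmt6_general hX q
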